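/- arXiv:2209.13250 — 2 statements merged into one kernel-verified Lean document; each statement's English description precedes it below -/
import Mathlib

section
/- Let G be an r-graph on [n] and x a feasible weight vector on G. Suppose i ≠ j in [n] satisfy L_G(i\j) = L_G(j\i) = ∅, where L_G(j\i) = {e : i ∉ e, e ∪ {j} ∈ E(G), e ∪ {i} ∉ E(G)}. Define y by y_ℓ = x_ℓ for ℓ ≠ i,j and y_i = y_j = (x_i + x_j)/2. Then λ(G, y) ≥ λ(G, x). -/
open Finset

/-- A (finite) hypergraph with vertex set `verts ⊆ ℕ` and edge set `edges`. -/
structure LHypergraph where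
  verts : Finset ℕ
  edges : Finset (Finset ℕ)

/-- Well-formedness: every edge is a subset of the vertex set. -/
def LHypergraph.IsWf (G : LHypergraph) : Prop := ∀ e ∈ G.edges, e ⊆ G.verts

/-- `G` is `r`-uniform: every edge has `r` vertices. -/
def LHypergraph.IsUniform (G : LHypergraph) (r : ℕ) : Prop := ∀ e ∈ G.edges, e.card = r

/-- The Lagrangian polynomial `λ(G, x) = ∑_{e ∈ E(G)} ∏_{i ∈ e} x_i`. -/
noncomputable def lagPoly (G : LHypergraph) (x : ℕ → ℝ) : ℝ := ∑ e ∈ G.edges, ∏ i ∈ e, x i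

/-- Feasible weight vectors: the standard simplex on the vertex set of `G`. -/
def simplex (G : LHypergraph) : Set (ℕ → ℝ) :=
  {x | (∀ i, 0 ≤ x i ∧ x i ≤ 1) ∧ ∑ i ∈ G.verts, x i = 1}

/-- The Lagrangian `λ(G)`: the supremum of `λ(G, x)` over the simplex. -/
noncomputable def lag (G : LHypergraph) : ℝ := sSup (lagPoly G '' simplex G)

/-- `L_G(j\i) = {e : i ∉ e, e ∪ {j} ∈ E(G), e ∪ {i} ∉ E(G)}`. -/
def linkDiff (G : LHypergraph) (j i : ℕ) : Set (Finset ℕ) :=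
  {e | i ∉ e ∧ insert j e ∈ G.edges ∧ insert i e ∉ G.edges}

/-!
The two empty links say that the edge set is invariant under the transposition `σ = (i j)`,
so `λ(G, x) = λ(G, x ∘ σ)` and `2 λ(G, x) = ∑_e (∏_e x + ∏_e (x ∘ σ))`. Edgewise this is at most
`2 ∏_e y`: the factor outside `{i, j}` is common and nonnegative; an edge meeting `{i, j}` once
contributes `x_i + x_j = 2 m` with `m = (x_i + x_j) / 2`, and an edge containing both contributes
`2 x_i x_j ≤ 2 m²` by AM-GM.
-/

open Equiv Function

namespace Finset

variable {α : Type*} [DecidableEq α]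

lemma map_swap_of_mem_of_notMem {s : Finset α} {i j : α} (hi : i ∈ s) (hj : j ∉ s) :
    s.map (swap i j).toEmbedding = insert j (s.erase i) := by
  ext k
  simp only [mem_map_equiv, symm_swap, mem_insert, mem_erase, swap_apply_def]
  split_ifs <;> grind

lemma map_swap_eq_self {s : Finset α} {i j : α} (h : i ∈ s ↔ j ∈ s) :
    s.map (swap i j).toEmbedding = s := by
  ext k
  simp only [mem_map_equiv, symm_swap, swap_apply_def]
  split_ifs <;> grind

lemma map_swap_map_swap (s : Finset α) (i j : α) :
    (s.map (swap i j).toEmbedding).map (swap i j).toEmbedding = s := by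
  ext k
  simp [mem_map_equiv]

end Finset

lemma prod_add_prod_comp_swap_le {α : Type*} [DecidableEq α] (x : α → ℝ) (hx : ∀ k, 0 ≤ x k)
    {i j : α} (hij : i ≠ j) (e : Finset α) :
    ∏ k ∈ e, x k + ∏ k ∈ e, x (swap i j k) ≤
      2 * ∏ k ∈ e, update (update x i ((x i + x j) / 2)) j ((x i + x j) / 2) k := by
  set m := (x i + x j) / 2 with hm
  have split (f : α → ℝ) : ∏ k ∈ e, f k =
      (if i ∈ e then f i else 1) * (if j ∈ e then f j else 1) * ∏ k ∈ e \ {i, j}, f k := by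
    rw [← prod_inter_mul_prod_sdiff e {i, j} f, inter_comm, ← prod_ite_mem, prod_pair hij]
  have off_pair (f : α → ℝ) (hf : ∀ k, k ≠ i → k ≠ j → f k = x k) :
      ∏ k ∈ e \ {i, j}, f k = ∏ k ∈ e \ {i, j}, x k :=
    prod_congr rfl fun k hk => by
      simp only [mem_sdiff, mem_insert, mem_singleton, not_or] at hk
      exact hf k hk.2.1 hk.2.2
  rw [split x, split fun k => x (swap i j k), split (update (update x i m) j m),
    off_pair _ fun k hi hj => congrArg x (swap_apply_of_ne_of_ne hi hj),
    off_pair (update (update x i m) j m) fun k hi hj => by rw [update_of_ne hj, update_of_ne hi]]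
  have hP : 0 ≤ ∏ k ∈ e \ {i, j}, x k := prod_nonneg fun k _ => hx k
  have amgm : x i * x j ≤ m * m := by rw [hm]; nlinarith [sq_nonneg (x i - x j)]
  simp only [swap_apply_left, swap_apply_right, update_self, update_of_ne hij]
  split_ifs <;> nlinarith

lemma map_swap_mem_edges_of_mem_of_notMem {G : LHypergraph} {i j : ℕ} (hL : linkDiff G i j = ∅)
    {e : Finset ℕ} (he : e ∈ G.edges) (hi : i ∈ e) (hj : j ∉ e) :
    e.map (swap i j).toEmbedding ∈ G.edges := by
  rw [Finset.map_swap_of_mem_of_notMem hi hj]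
  by_contra hnot
  have : e.erase i ∈ linkDiff G i j :=
    ⟨fun h => hj (Finset.mem_of_mem_erase h), by rwa [Finset.insert_erase hi], hnot⟩
  simp [hL] at this

lemma map_swap_mem_edges {G : LHypergraph} {i j : ℕ} (hLi : linkDiff G i j = ∅)
    (hLj : linkDiff G j i = ∅) {e : Finset ℕ} (he : e ∈ G.edges) :
    e.map (swap i j).toEmbedding ∈ G.edges := by
  by_cases h : i ∈ e ↔ j ∈ e
  · rwa [Finset.map_swap_eq_self h]
  · by_cases hi : i ∈ e
    · exact map_swap_mem_edges_of_mem_of_notMem hLi he hi (by tauto)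
    · rw [swap_comm]
      exact map_swap_mem_edges_of_mem_of_notMem hLj he (by tauto) hi

lemma lagPoly_comp_swap {G : LHypergraph} {i j : ℕ} (hLi : linkDiff G i j = ∅)
    (hLj : linkDiff G j i = ∅) (x : ℕ → ℝ) :
    lagPoly G (x ∘ swap i j) = lagPoly G x := by
  refine Finset.sum_nbij' (fun e => e.map (swap i j).toEmbedding)
    (fun e => e.map (swap i j).toEmbedding) (fun e he => map_swap_mem_edges hLi hLj he)
    (fun e he => map_swap_mem_edges hLi hLj he) (fun e _ => e.map_swap_map_swap i j)
    (fun e _ => e.map_swap_map_swap i j) fun e _ => ?_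
  simp [Finset.prod_map]

theorem stmt_3_general (G : LHypergraph)
    (x : ℕ → ℝ) (hx : x ∈ simplex G) (i j : ℕ) (hij : i ≠ j)
    (hLi : linkDiff G i j = ∅) (hLj : linkDiff G j i = ∅)
    (y : ℕ → ℝ)
    (hy : y = Function.update (Function.update x i ((x i + x j) / 2)) j ((x i + x j) / 2)) :
    lagPoly G x ≤ lagPoly G y := by
  have h2 : 2 * lagPoly G x ≤ 2 * lagPoly G y :=
    calc 2 * lagPoly G x = lagPoly G x + lagPoly G (x ∘ swap i j) := by
          rw [lagPoly_comp_swap hLi hLj]; ring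
      _ = ∑ e ∈ G.edges, (∏ k ∈ e, x k + ∏ k ∈ e, x (swap i j k)) :=
          Finset.sum_add_distrib.symm
      _ ≤ ∑ e ∈ G.edges, 2 * ∏ k ∈ e, y k := by
          rw [hy]
          exact Finset.sum_le_sum fun e _ =>
            prod_add_prod_comp_swap_le x (fun k => (hx.1 k).1) hij e
      _ = 2 * lagPoly G y := (Finset.mul_sum ..).symm
  linarith

/-- Symmetrization: if `L_G(i\j) = L_G(j\i) = ∅` and `y` is obtained from a
feasible weight vector `x` by replacing both `x i` and `x j` with their
average, then `λ(G, y) ≥ λ(G, x)`. -/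
theorem stmt_3 (r : ℕ) (G : LHypergraph) (hwf : G.IsWf) (hu : G.IsUniform r)
    (x : ℕ → ℝ) (hx : x ∈ simplex G) (i j : ℕ) (hij : i ≠ j)
    (hLi : linkDiff G i j = ∅) (hLj : linkDiff G j i = ∅)
    (y : ℕ → ℝ)
    (hy : y = Function.update (Function.update x i ((x i + x j) / 2)) j ((x i + x j) / 2)) :
    lagPoly G x ≤ lagPoly G y :=
  stmt_3_general G x hx i j hij hLi hLj y hy
end

section
/- The 3-graph G constructed in the previous remark, with vertex set [t], edges {ijk : i,j,k ∈ [t−1] distinct} ∪ {ijt : i,j ∈ [t−2] distinct} ∪ {1(t−1)t}, and weight vector x with x_i = 1/(t−1) for 1 ≤ i ≤ t−2 and x_j = 1/(2t−2) for j ∈ {t−1, t}, satisfies λ(G, x) = (1/(t−1)³)(C(t−1,3) + 1/4), which exceeds λ(K_{t−1}^3) = C(t−1,3)/(t−1)³. -/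
/-! On the first `t − 2` vertices the weight is a constant `c = 1/(t−1)` and on the last two it is
`c/2`. Splitting the triples inside `[t−1]` according to whether they contain vertex `t−2`, the
edges through one of the two light vertices contribute `2·C(t−2,2)·c²·(c/2) = C(t−2,2)·c³`, which
together with the `C(t−2,3)·c³` heavy triples gives `C(t−1,3)·c³` by Pascal's rule; the extra edge
`{0, t−2, t−1}` adds `c·(c/2)² = c³/4`. -/

open Finset

/-- The complete 3-graph `K_m³` on `m` vertices. -/
def completeG (m : ℕ) : LHypergraph :=
  ⟨Finset.range m, (Finset.range m).powersetCard 3⟩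

/-- The witness 3-graph on vertex set `{0, …, t−1}` with edges: all triples in
`{0, …, t−2}`, all triples `{i, j, t−1}` with `i, j ∈ {0, …, t−3}`, and the
extra edge `{0, t−2, t−1}`. -/
def W (t : ℕ) : LHypergraph :=
  ⟨Finset.range t,
    ((Finset.range (t - 1)).powersetCard 3) ∪
      (((Finset.range (t - 2)).powersetCard 2).image (insert (t - 1))) ∪
      {({0, t - 2, t - 1} : Finset ℕ)}⟩

namespace Finset

variable {α R : Type*} [CommSemiring R] {s : Finset α} {k : ℕ} {x : α → R} {c : R}

lemma sum_prod_powersetCard_of_eqOn (h : ∀ i ∈ s, x i = c) :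
    ∑ e ∈ s.powersetCard k, ∏ i ∈ e, x i = (s.card.choose k : R) * c ^ k := by
  have hconst : ∀ e ∈ s.powersetCard k, ∏ i ∈ e, x i = c ^ k := by
    intro e he
    obtain ⟨hsub, hcard⟩ := mem_powersetCard.mp he
    rw [prod_congr rfl fun i hi => h i (hsub hi), prod_const, hcard]
  rw [sum_congr rfl hconst, sum_const, card_powersetCard, nsmul_eq_mul]

lemma sum_prod_image_insert_powersetCard_of_eqOn [DecidableEq α] {a : α} (ha : a ∉ s)
    (h : ∀ i ∈ s, x i = c) :
    ∑ e ∈ (s.powersetCard k).image (insert a), ∏ i ∈ e, x i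
      = x a * ((s.card.choose k : R) * c ^ k) := by
  have hnotMem : ∀ p ∈ s.powersetCard k, a ∉ p := fun p hp hap =>
    ha ((mem_powersetCard.mp hp).1 hap)
  rw [sum_image fun p hp q hq hpq => by
      rw [← erase_insert (hnotMem p hp), ← erase_insert (hnotMem q hq), hpq],
    sum_congr rfl fun p hp => prod_insert (hnotMem p hp), ← mul_sum,
    sum_prod_powersetCard_of_eqOn h]

lemma disjoint_powersetCard_image_insert [DecidableEq α] {a : α} (ha : a ∉ s)
    (T : Finset (Finset α)) :
    Disjoint (s.powersetCard k) (T.image (insert a)) := by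
  simp only [disjoint_left, mem_powersetCard, mem_image]
  rintro _ ⟨hsub, -⟩ ⟨p, -, rfl⟩
  exact ha (hsub (mem_insert_self a p))

end Finset

lemma W_edges_eq (n : ℕ) :
    (W (n + 2)).edges = (range (n + 1)).powersetCard 3 ∪
      ((range n).powersetCard 2).image (insert (n + 1)) ∪ {{0, n, n + 1}} := rfl

lemma lagPoly_W {n : ℕ} (hn : 0 < n) {x : ℕ → ℝ} {c d : ℝ} (hc : ∀ i < n, x i = c)
    (hn₁ : x n = d) (hn₂ : x (n + 1) = d) :
    lagPoly (W (n + 2)) x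
      = (n.choose 3 : ℝ) * c ^ 3 + 2 * ((n.choose 2 : ℝ) * c ^ 2 * d) + c * d ^ 2 := by
  have hc' : ∀ i ∈ range n, x i = c := fun i hi => hc i (mem_range.mp hi)
  have hextra : ({0, n, n + 1} : Finset ℕ) ∉ (range (n + 1)).powersetCard 3 ∪
      ((range n).powersetCard 2).image (insert (n + 1)) := by
    rw [mem_union, mem_image, not_or, not_exists]
    refine ⟨fun h => notMem_range_self ((mem_powersetCard.mp h).1 (by simp)), ?_⟩
    rintro p ⟨hp, hpe⟩
    have hnp : n ∈ insert (n + 1) p := by simp [hpe]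
    rw [mem_insert, or_iff_right (by omega)] at hnp
    exact notMem_range_self ((mem_powersetCard.mp hp).1 hnp)
  have hextra_prod : ∏ i ∈ ({0, n, n + 1} : Finset ℕ), x i = c * d ^ 2 := by
    rw [prod_insert (by simp; omega), prod_pair (by omega), hc 0 hn, hn₁, hn₂]
    ring
  rw [lagPoly, W_edges_eq, sum_union (disjoint_singleton_right.mpr hextra),
    sum_union (disjoint_powersetCard_image_insert notMem_range_self _), range_add_one,
    powersetCard_succ_insert notMem_range_self,
    sum_union (disjoint_powersetCard_image_insert notMem_range_self _),
    sum_prod_powersetCard_of_eqOn hc',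
    sum_prod_image_insert_powersetCard_of_eqOn notMem_range_self hc',
    sum_prod_image_insert_powersetCard_of_eqOn (by simp) hc',
    sum_singleton, hextra_prod, card_range, hn₁, hn₂]
  ring

/-- The witness graph `W t` with the weight vector assigning `1/(t−1)` to the
first `t−2` vertices and `1/(2t−2)` to the last two satisfies
`λ(W t, x) = (1/(t−1)³)(C(t−1,3) + 1/4) > C(t−1,3)/(t−1)³ = λ(K_{t−1}³)`. -/
theorem stmt_13 (t : ℕ) (ht : 4 ≤ t)
    (x : ℕ → ℝ)
    (hx : x = fun i => if i < t - 2 then 1 / ((t : ℝ) - 1)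
      else if i < t then 1 / (2 * (t : ℝ) - 2) else 0) :
    lagPoly (W t) x = 1 / ((t : ℝ) - 1) ^ 3 * ((Nat.choose (t - 1) 3 : ℝ) + 1 / 4) ∧
    (Nat.choose (t - 1) 3 : ℝ) / ((t : ℝ) - 1) ^ 3 < lagPoly (W t) x := by
  obtain ⟨n, rfl⟩ : ∃ n, t = n + 2 := ⟨t - 2, by omega⟩
  have hcast : ((n + 2 : ℕ) : ℝ) - 1 = n + 1 := by push_cast; ring
  have hheavy : ∀ i < n, x i = 1 / ((n : ℝ) + 1) := fun i hi => by
    simp only [hx, Nat.add_sub_cancel, if_pos hi, hcast]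
  have hlight : ∀ i, n ≤ i → i < n + 2 → x i = 1 / (2 * ((n : ℝ) + 1)) := fun i hni hi => by
    simp only [hx, Nat.add_sub_cancel, if_neg (not_lt.mpr hni), if_pos hi]
    push_cast
    ring_nf
  have hval :
      lagPoly (W (n + 2)) x = 1 / ((n : ℝ) + 1) ^ 3 * (((n + 1).choose 3 : ℝ) + 1 / 4) := by
    rw [lagPoly_W (by omega) hheavy (hlight n le_rfl (by omega))
      (hlight (n + 1) (by omega) (by omega)), Nat.choose_succ_succ' n 2]
    push_cast
    field_simp
    ring
  rw [hval, hcast, show n + 2 - 1 = n + 1 from rfl, one_div_mul_eq_div]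
  refine ⟨rfl, ?_⟩
  gcongr
  linarith
end
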